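/- Let d ≥ 2 and let L ⊂ ℝ^d be an integration lattice whose lattice point set 𝒫(L) = L ∩ [0,1)^d has n elements. Then the spectral test satisfies σ(L) ≥ (√π/2)·(Γ(d/2 + 1))^{−1/d}·n^{−1/d}. -/

import Mathlib

/-!
Write `L = span ℤ (range b)`. Since `ℤ^d ⊆ L` and `[0,1)^d` is a fundamental domain of `ℤ^d`, the
points of `L` in `[0,1)^d` represent each class of `L / ℤ^d` exactly once, so
`n = [L : ℤ^d] = 1 / covol L`. The dual basis `b*` spans `L^⊥`, whose covolume is therefore `n`;
and `L^⊥ ⊆ ℤ^d`, so its nonzero vectors have norm at least `1`. Minkowski's convex body theorem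
finds a nonzero `h ∈ L^⊥` in the closed ball of volume `2^d n`, whose radius is
`2 (n Γ(d/2 + 1))^(1/d) / √π`; the spectral test is at least the inverse of that radius.
-/

open MeasureTheory Real
open scoped ENNReal NNReal

noncomputable section

/-- A `d`-dimensional lattice: the set of integer combinations of some basis of `ℝ^d`. -/
def IsLattice (d : ℕ) (L : Set (EuclideanSpace ℝ (Fin d))) : Prop :=
  ∃ b : Module.Basis (Fin d) ℝ (EuclideanSpace ℝ (Fin d)),
    L = {v | ∃ k : Fin d → ℤ, v = ∑ i, (k i : ℝ) • b i}

/-- An integration lattice: a lattice which contains `ℤ^d`. -/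
def IsIntegrationLattice (d : ℕ) (L : Set (EuclideanSpace ℝ (Fin d))) : Prop :=
  IsLattice d L ∧ ∀ v : EuclideanSpace ℝ (Fin d), (∀ i, ∃ z : ℤ, v i = z) → v ∈ L

/-- The half-open unit cube `[0,1)^d`. -/
def unitBox (d : ℕ) : Set (EuclideanSpace ℝ (Fin d)) :=
  {x | ∀ i, 0 ≤ x i ∧ x i < 1}

/-- The dual lattice `L^⊥ = {h : ⟪h,x⟫ ∈ ℤ for all x ∈ L}`. -/
def dualLattice (d : ℕ) (L : Set (EuclideanSpace ℝ (Fin d))) :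
    Set (EuclideanSpace ℝ (Fin d)) :=
  {h | ∀ v ∈ L, ∃ z : ℤ, (inner ℝ h v : ℝ) = z}

/-- The spectral test `σ(L) = 1 / min{‖h‖ : h ∈ L^⊥, h ≠ 0}`. -/
def spectralTest (d : ℕ) (L : Set (EuclideanSpace ℝ (Fin d))) : ℝ :=
  (sInf {r : ℝ | ∃ h ∈ dualLattice d L, h ≠ 0 ∧ r = ‖h‖})⁻¹

/-- The isotropic discrepancy of an `n`-point set `P ⊆ [0,1)^d`: the supremum over all
convex subsets `K` of `[0,1)^d` of `|#(K ∩ P)/n − vol(K)|`. -/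
def isoDisc (d : ℕ) (P : Set (EuclideanSpace ℝ (Fin d))) (n : ℕ) : ℝ :=
  sSup {r : ℝ | ∃ K : Set (EuclideanSpace ℝ (Fin d)), Convex ℝ K ∧ K ⊆ unitBox d ∧
    r = |(Nat.card ↥(K ∩ P) : ℝ) / n - (volume K).toReal|}


open Module Submodule ZSpan Set

section Lattices

variable {E : Type*} [NormedAddCommGroup E] [InnerProductSpace ℝ E] {ι : Type*} [Fintype ι]

theorem mem_span_int_range_iff_exists_sum {M : Type*} [AddCommGroup M] [Module ℝ M] (b : ι → M)
    (v : M) : v ∈ span ℤ (range b) ↔ ∃ k : ι → ℤ, v = ∑ i, (k i : ℝ) • b i := by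
  simp_rw [mem_span_range_iff_exists_fun, Int.cast_smul_eq_zsmul, eq_comm]

/-- Every coset of `span ℤ (range b₀)` in `Λ` meets the fundamental domain exactly once, in the
point `fract b₀ v`. -/
theorem ZSpan.card_inter_fundamentalDomain_eq_relIndex (b₀ : Basis ι ℝ E) {Λ : Submodule ℤ E}
    (h : span ℤ (range b₀) ≤ Λ) :
    Nat.card ↥((Λ : Set E) ∩ fundamentalDomain b₀) =
      (span ℤ (range b₀)).toAddSubgroup.relIndex Λ.toAddSubgroup := by
  refine Nat.card_eq_of_bijective
    (fun x => ((⟨x, x.2.1⟩ : Λ) : Λ ⧸ (span ℤ (range b₀)).toAddSubgroup.addSubgroupOf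
      Λ.toAddSubgroup)) ⟨?_, ?_⟩
  · rintro ⟨x, _, hx⟩ ⟨y, _, hy⟩ hxy
    rw [QuotientAddGroup.eq, AddSubgroup.mem_addSubgroupOf] at hxy
    have hfract := (fract_eq_fract b₀ x y).mpr hxy
    rw [fract_eq_self.mpr hx, fract_eq_self.mpr hy] at hfract
    exact Subtype.ext hfract
  · intro q
    obtain ⟨⟨v, hv⟩, rfl⟩ := QuotientAddGroup.mk_surjective q
    refine ⟨⟨fract b₀ v, ?_, fract_mem_fundamentalDomain b₀ v⟩, ?_⟩
    · rw [fract_apply]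
      exact sub_mem hv (h (floor b₀ v).2)
    · rw [QuotientAddGroup.eq, AddSubgroup.mem_addSubgroupOf]
      simp [fract_apply]

section Dual

variable [DecidableEq ι]

theorem nondegenerate_innerₗ : (innerₗ E).Nondegenerate :=
  ⟨fun x hx => inner_self_eq_zero.mp (hx x), fun y hy => inner_self_eq_zero.mp (hy y)⟩

noncomputable def Module.Basis.innerDualBasis (b : Basis ι ℝ E) : Basis ι ℝ E :=
  LinearMap.BilinForm.dualBasis (innerₗ E) nondegenerate_innerₗ b

theorem Module.Basis.inner_innerDualBasis_left (b : Basis ι ℝ E) (i j : ι) :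
    inner ℝ (b.innerDualBasis i) (b j) = if j = i then 1 else 0 :=
  LinearMap.BilinForm.apply_dualBasis_left nondegenerate_innerₗ b i j

/-- If `M`, `N` are the coordinate matrices of `b*`, `b` in an orthonormal basis, then `Mᵀ N` is
the Gram matrix `(⟪b* i, b j⟫) = 1`. -/
theorem Module.Basis.det_innerDualBasis_mul_det (b₀ : OrthonormalBasis ι ℝ E) (b : Basis ι ℝ E) :
    b₀.toBasis.det b.innerDualBasis * b₀.toBasis.det b = 1 := by
  rw [Basis.det_apply, Basis.det_apply, ← Matrix.det_transpose, ← Matrix.det_mul]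
  convert Matrix.det_one (n := ι)
  ext i j
  simp only [Matrix.mul_apply, Matrix.transpose_apply, Basis.toMatrix_apply,
    OrthonormalBasis.coe_toBasis_repr_apply, OrthonormalBasis.repr_apply_apply]
  rw [Finset.sum_congr rfl fun k _ => by rw [real_inner_comm (b.innerDualBasis i)],
    b₀.sum_inner_mul_inner, b.inner_innerDualBasis_left, Matrix.one_apply]
  exact if_congr eq_comm rfl rfl

end Dual

section Measure

variable [MeasurableSpace E] [BorelSpace E] [FiniteDimensional ℝ E]

theorem OrthonormalBasis.volume_fundamentalDomain (b : OrthonormalBasis ι ℝ E) :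
    volume (fundamentalDomain b.toBasis) = 1 := by
  rw [measure_congr (fundamentalDomain_ae_parallelepiped b.toBasis volume), b.coe_toBasis,
    b.volume_parallelepiped]

theorem ZSpan.exists_ne_zero_mem_span_norm_le [Nontrivial E] (b : Basis ι ℝ E) {r : ℝ}
    (h : volume (fundamentalDomain b) * 2 ^ finrank ℝ E ≤ volume (Metric.closedBall (0 : E) r)) :
    ∃ v ∈ span ℤ (range b), v ≠ 0 ∧ ‖v‖ ≤ r := by
  have : Countable (span ℤ (range b)).toAddSubgroup :=
    inferInstanceAs (Countable (span ℤ (range b)))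
  obtain ⟨v, hv0, hvr⟩ := exists_ne_zero_mem_lattice_of_measure_mul_two_pow_le_measure
    (ZSpan.isAddFundamentalDomain' b volume) (fun x hx => by simpa using hx)
    (convex_closedBall 0 r) (isCompact_closedBall 0 r) h
  exact ⟨v, v.2, fun h0 => hv0 (Subtype.ext h0), by simpa using hvr⟩

variable [DecidableEq ι]

theorem ZLattice.covolume_span_eq_abs_det (b₀ : OrthonormalBasis ι ℝ E) (b : Basis ι ℝ E) :
    ZLattice.covolume (span ℤ (range b)) = |b₀.toBasis.det b| := by
  rw [ZLattice.covolume_eq_measure_fundamentalDomain _ volume (ZSpan.isAddFundamentalDomain b _),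
    measureReal_fundamentalDomain b volume b₀.toBasis, measureReal_def,
    b₀.volume_fundamentalDomain, ENNReal.toReal_one, mul_one]

theorem relIndex_span_eq_inv_abs_det (b₀ : OrthonormalBasis ι ℝ E) (b : Basis ι ℝ E)
    (h : span ℤ (range b₀.toBasis) ≤ span ℤ (range b)) :
    ((span ℤ (range b₀.toBasis)).toAddSubgroup.relIndex (span ℤ (range b)).toAddSubgroup : ℝ) =
      |b₀.toBasis.det b|⁻¹ := by
  rw [← ZLattice.covolume_div_covolume_eq_relIndex' _ _ h, ZLattice.covolume_span_eq_abs_det b₀,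
    ZLattice.covolume_span_eq_abs_det b₀, Basis.det_self, abs_one, one_div]

theorem ZSpan.volume_fundamentalDomain_innerDualBasis (b₀ : OrthonormalBasis ι ℝ E)
    (b : Basis ι ℝ E) :
    volume (fundamentalDomain b.innerDualBasis) = ENNReal.ofReal |b₀.toBasis.det b|⁻¹ := by
  rw [measure_fundamentalDomain _ volume b₀.toBasis, b₀.volume_fundamentalDomain, mul_one,
    eq_inv_of_mul_eq_one_left (b.det_innerDualBasis_mul_det b₀), abs_inv]

end Measure

end Lattices

section Euclidean

variable {d : ℕ}

theorem unitBox_eq_fundamentalDomain :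
    unitBox d = fundamentalDomain (EuclideanSpace.basisFun (Fin d) ℝ).toBasis := by
  ext x
  simp [unitBox, mem_fundamentalDomain]

theorem mem_span_basisFun_iff (v : EuclideanSpace ℝ (Fin d)) :
    v ∈ span ℤ (range (EuclideanSpace.basisFun (Fin d) ℝ).toBasis) ↔ ∀ i, ∃ z : ℤ, v i = z := by
  rw [Basis.mem_span_iff_repr_mem]
  simp [eq_comm]

theorem dualLattice_span_eq (b : Basis (Fin d) ℝ (EuclideanSpace ℝ (Fin d))) :
    dualLattice d (span ℤ (range b)) = span ℤ (range b.innerDualBasis) := by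
  ext h
  rw [SetLike.mem_coe, Basis.innerDualBasis,
    ← LinearMap.BilinForm.dualSubmodule_span_of_basis _ nondegenerate_innerₗ]
  simp [dualLattice, LinearMap.BilinForm.mem_dualSubmodule, Submodule.mem_one, eq_comm]

theorem one_le_norm_of_mem_dualLattice {L : Set (EuclideanSpace ℝ (Fin d))}
    (hZ : ∀ v : EuclideanSpace ℝ (Fin d), (∀ i, ∃ z : ℤ, v i = z) → v ∈ L)
    {h : EuclideanSpace ℝ (Fin d)} (hh : h ∈ dualLattice d L) (h0 : h ≠ 0) : 1 ≤ ‖h‖ := by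
  obtain ⟨i, hi⟩ : ∃ i, h i ≠ 0 := by
    by_contra! hzero
    exact h0 (PiLp.ext hzero)
  obtain ⟨z, hz⟩ := hh (EuclideanSpace.single i 1)
    (hZ _ fun j => ⟨if j = i then 1 else 0, by simp⟩)
  rw [EuclideanSpace.inner_single_right, one_mul, conj_trivial] at hz
  have hz0 : z ≠ 0 := by rintro rfl; exact hi (by simpa using hz)
  calc (1 : ℝ) ≤ |(z : ℝ)| := by exact_mod_cast Int.one_le_abs hz0
    _ = ‖h i‖ := by rw [hz, Real.norm_eq_abs]
    _ ≤ ‖h‖ := PiLp.norm_apply_le h i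

theorem inv_le_spectralTest {L : Set (EuclideanSpace ℝ (Fin d))} {R : ℝ}
    (hR : ∃ h ∈ dualLattice d L, h ≠ 0 ∧ ‖h‖ ≤ R)
    (hone : ∀ h ∈ dualLattice d L, h ≠ 0 → 1 ≤ ‖h‖) : R⁻¹ ≤ spectralTest d L := by
  obtain ⟨h, hh, h0, hhR⟩ := hR
  have hbdd : BddBelow {r : ℝ | ∃ h ∈ dualLattice d L, h ≠ 0 ∧ r = ‖h‖} :=
    ⟨0, by rintro _ ⟨h, -, -, rfl⟩; positivity⟩
  have hle : sInf {r : ℝ | ∃ h ∈ dualLattice d L, h ≠ 0 ∧ r = ‖h‖} ≤ R :=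
    (csInf_le hbdd ⟨h, hh, h0, rfl⟩).trans hhR
  have hpos : 0 < sInf {r : ℝ | ∃ h ∈ dualLattice d L, h ≠ 0 ∧ r = ‖h‖} := by
    refine one_pos.trans_le (le_csInf ⟨_, h, hh, h0, rfl⟩ ?_)
    rintro _ ⟨h, hh, h0, rfl⟩
    exact hone h hh h0
  exact inv_anti₀ hpos hle

theorem volume_closedBall_eq_ofReal_mul_two_pow (hd : d ≠ 0) {x : ℝ} (hx : 0 < x) :
    volume (Metric.closedBall (0 : EuclideanSpace ℝ (Fin d))
      (√π / 2 * Gamma ((d : ℝ) / 2 + 1) ^ (-(1 / (d : ℝ))) * x ^ (-(1 / (d : ℝ))))⁻¹) =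
      ENNReal.ofReal x * 2 ^ d := by
  have : Nonempty (Fin d) := ⟨⟨0, Nat.pos_of_ne_zero hd⟩⟩
  have hΓ : 0 < Gamma ((d : ℝ) / 2 + 1) := Gamma_pos_of_pos (by positivity)
  have hradius : ((√π / 2 * Gamma ((d : ℝ) / 2 + 1) ^ (-(1 / (d : ℝ))) *
      x ^ (-(1 / (d : ℝ))))⁻¹) ^ d * (√π ^ d / Gamma ((d : ℝ) / 2 + 1)) = x * 2 ^ d := by
    rw [one_div, rpow_neg hΓ.le, rpow_neg hx.le, inv_pow, mul_pow, mul_pow, inv_pow, inv_pow,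
      rpow_inv_natCast_pow hΓ.le hd, rpow_inv_natCast_pow hx.le hd, div_pow]
    field_simp
  rw [EuclideanSpace.volume_closedBall, Fintype.card_fin, ← ENNReal.ofReal_pow (by positivity),
    ← ENNReal.ofReal_mul (by positivity), hradius, ENNReal.ofReal_mul hx.le,
    ENNReal.ofReal_pow zero_le_two, ENNReal.ofReal_ofNat]

end Euclidean

theorem stmt17_general (d : ℕ) (hd : 2 ≤ d) (L : Set (EuclideanSpace ℝ (Fin d)))
    (hL : IsIntegrationLattice d L) (n : ℕ)
    (hn : Nat.card ↥(L ∩ unitBox d) = n) :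
    Real.sqrt π / 2 * Real.Gamma ((d : ℝ) / 2 + 1) ^ (-(1 / (d : ℝ))) *
        (n : ℝ) ^ (-(1 / (d : ℝ))) ≤
      spectralTest d L := by
  obtain ⟨⟨b, hb⟩, hZ⟩ := hL
  obtain rfl : L = span ℤ (range b) := by
    ext v
    rw [hb, SetLike.mem_coe, mem_span_int_range_iff_exists_sum]
    rfl
  set b₀ := EuclideanSpace.basisFun (Fin d) ℝ
  have hle : span ℤ (range b₀.toBasis) ≤ span ℤ (range b) :=
    fun v hv => hZ v ((mem_span_basisFun_iff v).mp hv)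
  have hindex : (n : ℝ) = |b₀.toBasis.det b|⁻¹ := by
    rw [← hn, unitBox_eq_fundamentalDomain, card_inter_fundamentalDomain_eq_relIndex _ hle,
      relIndex_span_eq_inv_abs_det b₀ b hle]
  have hn0 : (0 : ℝ) < n := by
    rw [hindex]
    exact inv_pos.mpr (abs_pos.mpr (b₀.toBasis.isUnit_det b).ne_zero)
  have : Nonempty (Fin d) := ⟨⟨0, by omega⟩⟩
  obtain ⟨h, hh, h0, hnorm⟩ := exists_ne_zero_mem_span_norm_le b.innerDualBasis
    (r := (√π / 2 * Gamma ((d : ℝ) / 2 + 1) ^ (-(1 / (d : ℝ))) * (n : ℝ) ^ (-(1 / (d : ℝ))))⁻¹)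
    (by rw [volume_fundamentalDomain_innerDualBasis b₀, ← hindex,
      volume_closedBall_eq_ofReal_mul_two_pow (by omega) hn0, finrank_euclideanSpace_fin])
  rw [← inv_inv (√π / 2 * _ * _)]
  refine inv_le_spectralTest ⟨h, ?_, h0, hnorm⟩ fun _ hh h0 =>
    one_le_norm_of_mem_dualLattice hZ hh h0
  rwa [dualLattice_span_eq]

theorem stmt17 (d : ℕ) (hd : 2 ≤ d) (L : Set (EuclideanSpace ℝ (Fin d)))
    (hL : IsIntegrationLattice d L) (n : ℕ) (hfin : (L ∩ unitBox d).Finite)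
    (hn : Nat.card ↥(L ∩ unitBox d) = n) :
    Real.sqrt π / 2 * Real.Gamma ((d : ℝ) / 2 + 1) ^ (-(1 / (d : ℝ))) *
        (n : ℝ) ^ (-(1 / (d : ℝ))) ≤
      spectralTest d L :=
  stmt17_general d hd L hL n hn
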